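/- arXiv:0809.3674 — 4 statements merged into one kernel-verified Lean document; each statement's English description precedes it below -/
import Mathlib

section
/- Let d, α ∈ (0,1) and let a_1, ..., a_n be real numbers with ∑ a_i ≥ (d - α)n and ∑ a_i² ≤ (d² + α)n. Then for all but at most 3α^{1/2} n values of i we have |a_i - d| ≤ α^{1/4}. -/
/-! Expanding the square, the two moment bounds give `∑ (aᵢ - d)² ≤ (1 + 2d) α n ≤ 3 α n`.
Each index with `|aᵢ - d| > α^{1/4}` contributes more than `α^{1/2}` to this sum (Chebyshev), so
there are at most `3 α n / α^{1/2} = 3 α^{1/2} n` of them. -/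

open Finset

section

variable {ι : Type*} [Fintype ι] (a : ι → ℝ)

theorem sum_sq_sub_le_of_moment_bounds {d α : ℝ} (hd : 0 ≤ d)
    (hsum : (d - α) * Fintype.card ι ≤ ∑ i, a i)
    (hsq : ∑ i, a i ^ 2 ≤ (d ^ 2 + α) * Fintype.card ι) :
    ∑ i, (a i - d) ^ 2 ≤ (1 + 2 * d) * α * Fintype.card ι := by
  have expand : ∑ i, (a i - d) ^ 2
      = ∑ i, a i ^ 2 - 2 * d * ∑ i, a i + d ^ 2 * Fintype.card ι := by
    have hsummand : ∀ i, (a i - d) ^ 2 = a i ^ 2 - 2 * d * a i + d ^ 2 := fun i => by ring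
    simp only [hsummand, sum_add_distrib, sum_sub_distrib, ← mul_sum, sum_const, card_univ,
      nsmul_eq_mul, mul_comm (Fintype.card ι : ℝ)]
  rw [expand]
  nlinarith [mul_le_mul_of_nonneg_left hsum hd]

theorem card_lt_abs_sub_mul_sq_le_sum_sq_sub (c : ℝ) {t : ℝ} (ht : 0 ≤ t) :
    #{i | t < |a i - c|} * t ^ 2 ≤ ∑ i, (a i - c) ^ 2 :=
  calc (#{i | t < |a i - c|} : ℝ) * t ^ 2 = ∑ _i ∈ {i | t < |a i - c|}, t ^ 2 := by
        rw [sum_const, nsmul_eq_mul]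
    _ ≤ ∑ i ∈ {i | t < |a i - c|}, (a i - c) ^ 2 := by
        refine sum_le_sum fun i hi => ?_
        rw [← sq_abs (a i - c)]
        exact pow_le_pow_left₀ ht (mem_filter.mp hi).2.le 2
    _ ≤ ∑ i, (a i - c) ^ 2 :=
        sum_le_sum_of_subset_of_nonneg (subset_univ _) fun i _ _ => sq_nonneg _

end

theorem second_moment_method_general (n : ℕ) (a : Fin n → ℝ) (d α : ℝ)
    (hd0 : 0 < d) (hd1 : d < 1) (hα0 : 0 < α)
    (hsum : (d - α) * n ≤ ∑ i, a i)
    (hsq : ∑ i, (a i) ^ 2 ≤ (d ^ 2 + α) * n) :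
    (Nat.card {i : Fin n // α ^ ((1 : ℝ) / 4) < |a i - d|} : ℝ)
      ≤ 3 * α ^ ((1 : ℝ) / 2) * n := by
  have hs : 0 < α ^ ((1 : ℝ) / 2) := by positivity
  have hquarter_sq : (α ^ ((1 : ℝ) / 4)) ^ 2 = α ^ ((1 : ℝ) / 2) := by
    rw [← Real.rpow_natCast, ← Real.rpow_mul hα0.le]; norm_num
  have hdev : ∑ i, (a i - d) ^ 2 ≤ 3 * α * n := by
    have h := sum_sq_sub_le_of_moment_bounds a hd0.le (by simpa using hsum) (by simpa using hsq)
    rw [Fintype.card_fin] at h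
    nlinarith [mul_nonneg hα0.le (Nat.cast_nonneg (α := ℝ) n)]
  have hchebyshev :=
    card_lt_abs_sub_mul_sq_le_sum_sq_sub a d (by positivity : 0 ≤ α ^ ((1 : ℝ) / 4))
  rw [hquarter_sq] at hchebyshev
  rw [Nat.card_eq_fintype_card, Fintype.card_subtype]
  refine le_of_mul_le_mul_right (hchebyshev.trans (hdev.trans_eq ?_)) hs
  have hhalf_sq : α ^ ((1 : ℝ) / 2) * α ^ ((1 : ℝ) / 2) = α := by
    rw [← Real.rpow_add hα0]; norm_num
  linear_combination (-3 * (n : ℝ)) * hhalf_sq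

/-- Second moment method: if `a : Fin n → ℝ` satisfies `∑ aᵢ ≥ (d - α) n` and
`∑ aᵢ² ≤ (d² + α) n` with `d, α ∈ (0,1)`, then for all but at most `3 α^{1/2} n`
values of `i` we have `|aᵢ - d| ≤ α^{1/4}`. -/
theorem second_moment_method (n : ℕ) (a : Fin n → ℝ) (d α : ℝ)
    (hd0 : 0 < d) (hd1 : d < 1) (hα0 : 0 < α) (hα1 : α < 1)
    (hsum : (d - α) * n ≤ ∑ i, a i)
    (hsq : ∑ i, (a i) ^ 2 ≤ (d ^ 2 + α) * n) :
    (Nat.card {i : Fin n // α ^ ((1 : ℝ) / 4) < |a i - d|} : ℝ)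
      ≤ 3 * α ^ ((1 : ℝ) / 2) * n :=
  second_moment_method_general n a d α hd0 hd1 hα0 hsum hsq
end

section
/- Let f : X × Y → [-1,1] and let u : X → [0,1], v : Y → [0,1] be functions on finite nonempty sets X, Y. Then (E_{x∈X, y∈Y} u(x)v(y)f(x,y))⁴ ≤ C₄(f), where C₄(f) = E_{x₁,x₂∈X, y₁,y₂∈Y} f(x₁,y₁)f(x₁,y₂)f(x₂,y₁)f(x₂,y₂). -/
/-!
Two applications of Cauchy–Schwarz. Writing `S = ∑ₓ u x · ∑_y v y f x y`, the first one (in `x`,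
using `|u| ≤ 1`) gives `S² ≤ |X| · ∑_{y₁,y₂} v y₁ v y₂ G y₁ y₂` with `G y₁ y₂ = ∑ₓ f x y₁ f x y₂`;
the second one (in `(y₁, y₂)`, using `|v y₁ v y₂| ≤ 1`) bounds the square of that sum by
`|Y|² · ∑_{y₁,y₂} (G y₁ y₂)²`, and the last sum is the `C₄`-count of `f`.
-/

open Finset

section
variable {ι κ R : Type*} [Fintype ι]

lemma sq_sum_mul_le_card_mul_sum_sq [CommRing R] [LinearOrder R] [IsStrictOrderedRing R]
    (w g : ι → R) (hw : ∀ i, |w i| ≤ 1) :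
    (∑ i, w i * g i) ^ 2 ≤ Fintype.card ι * ∑ i, g i ^ 2 := by
  calc (∑ i, w i * g i) ^ 2 ≤ Fintype.card ι * ∑ i, (w i * g i) ^ 2 := sq_sum_le_card_mul_sum_sq
    _ ≤ Fintype.card ι * ∑ i, g i ^ 2 := by
      refine mul_le_mul_of_nonneg_left (sum_le_sum fun i _ => ?_) (Nat.cast_nonneg _)
      rw [mul_pow]
      exact mul_le_of_le_one_left (sq_nonneg _) ((sq_le_one_iff_abs_le_one _).2 (hw i))

variable [Fintype κ] [CommSemiring R]

lemma sum_sq_sum_eq_sum_sum_sum_mul (g : ι → κ → R) :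
    ∑ i, (∑ j, g i j) ^ 2 = ∑ j₁, ∑ j₂, ∑ i, g i j₁ * g i j₂ := by
  simp_rw [sq, sum_mul_sum]
  rw [sum_comm]
  exact sum_congr rfl fun _ _ => sum_comm

lemma sum_sum_sq_sum_mul_eq (f : ι → κ → R) :
    ∑ j₁, ∑ j₂, (∑ i, f i j₁ * f i j₂) ^ 2
      = ∑ i₁, ∑ i₂, ∑ j₁, ∑ j₂, f i₁ j₁ * f i₁ j₂ * f i₂ j₁ * f i₂ j₂ := by
  have := sum_sq_sum_eq_sum_sum_sum_mul fun (p : κ × κ) i => f i p.1 * f i p.2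
  simp only [Fintype.sum_prod_type] at this
  rw [this]
  simp only [mul_assoc, mul_left_comm]

end

lemma div_pow_four_le_div_sq {K : Type*} [Field K] [LinearOrder K] [IsStrictOrderedRing K]
    {S C a : K} (h : S ^ 4 ≤ a ^ 2 * C) : (S / a) ^ 4 ≤ C / a ^ 2 := by
  rcases eq_or_ne a 0 with rfl | ha
  · simp
  calc (S / a) ^ 4 = S ^ 4 / (a ^ 2) ^ 2 := by ring
    _ ≤ a ^ 2 * C / (a ^ 2) ^ 2 := by gcongr
    _ = C / a ^ 2 := by field_simp

theorem gowers_cauchy_schwarz_general (X Y : Type*) [Fintype X] [Fintype Y]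
    (f : X → Y → ℝ) (u : X → ℝ) (v : Y → ℝ)
    (hu : ∀ x, 0 ≤ u x ∧ u x ≤ 1) (hv : ∀ y, 0 ≤ v y ∧ v y ≤ 1) :
    ((∑ x, ∑ y, u x * v y * f x y) /
        ((Fintype.card X : ℝ) * (Fintype.card Y : ℝ))) ^ 4
      ≤ (∑ x₁, ∑ x₂, ∑ y₁, ∑ y₂, f x₁ y₁ * f x₁ y₂ * f x₂ y₁ * f x₂ y₂) /
        ((Fintype.card X : ℝ) ^ 2 * (Fintype.card Y : ℝ) ^ 2) := by
  have abs_u x : |u x| ≤ 1 := abs_le.2 ⟨by linarith [hu x], (hu x).2⟩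
  have abs_v y : |v y| ≤ 1 := abs_le.2 ⟨by linarith [hv y], (hv y).2⟩
  set S := ∑ x, ∑ y, u x * v y * f x y
  set T := ∑ p : Y × Y, v p.1 * v p.2 * ∑ x, f x p.1 * f x p.2 with T_def
  have hS : S ^ 2 ≤ Fintype.card X * T := by
    have S_eq : S = ∑ x, u x * ∑ y, v y * f x y := by simp only [S, mul_sum, mul_assoc]
    have sum_sq_eq : ∑ x, (∑ y, v y * f x y) ^ 2 = T := by
      rw [sum_sq_sum_eq_sum_sum_sum_mul, T_def, Fintype.sum_prod_type]
      simp only [mul_sum, mul_assoc, mul_left_comm]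
    exact S_eq ▸ sum_sq_eq ▸ sq_sum_mul_le_card_mul_sum_sq _ _ abs_u
  have hT : T ^ 2 ≤ (Fintype.card Y : ℝ) ^ 2 *
      ∑ x₁, ∑ x₂, ∑ y₁, ∑ y₂, f x₁ y₁ * f x₁ y₂ * f x₂ y₁ * f x₂ y₂ := by
    have := sq_sum_mul_le_card_mul_sum_sq (fun p : Y × Y => v p.1 * v p.2)
      (fun p => ∑ x, f x p.1 * f x p.2)
      fun p => by rw [abs_mul]; exact mul_le_one₀ (abs_v _) (abs_nonneg _) (abs_v _)
    rwa [← T_def, Fintype.card_prod, Fintype.sum_prod_type, sum_sum_sq_sum_mul_eq, Nat.cast_mul,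
      ← sq] at this
  refine mul_pow (Fintype.card X : ℝ) (Fintype.card Y) 2 ▸ div_pow_four_le_div_sq ?_
  calc S ^ 4 = (S ^ 2) ^ 2 := by ring
    _ ≤ (Fintype.card X * T) ^ 2 := pow_le_pow_left₀ (sq_nonneg S) hS 2
    _ ≤ _ := by rw [mul_pow, mul_pow, mul_assoc]; gcongr

/-- Gowers–Cauchy–Schwarz: for `f : X × Y → [-1,1]`, `u : X → [0,1]`,
`v : Y → [0,1]`, we have `(E u(x) v(y) f(x,y))⁴ ≤ C₄(f)`. -/
theorem gowers_cauchy_schwarz (X Y : Type*) [Fintype X] [Fintype Y]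
    [Nonempty X] [Nonempty Y] (f : X → Y → ℝ) (u : X → ℝ) (v : Y → ℝ)
    (hf : ∀ x y, -1 ≤ f x y ∧ f x y ≤ 1)
    (hu : ∀ x, 0 ≤ u x ∧ u x ≤ 1) (hv : ∀ y, 0 ≤ v y ∧ v y ≤ 1) :
    ((∑ x, ∑ y, u x * v y * f x y) /
        ((Fintype.card X : ℝ) * (Fintype.card Y : ℝ))) ^ 4
      ≤ (∑ x₁, ∑ x₂, ∑ y₁, ∑ y₂, f x₁ y₁ * f x₁ y₂ * f x₂ y₁ * f x₂ y₂) /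
        ((Fintype.card X : ℝ) ^ 2 * (Fintype.card Y : ℝ) ^ 2) :=
  gowers_cauchy_schwarz_general X Y f u v hu hv
end

section
/- Let G be a bipartite graph with parts X, Y of sizes at least n and density d, where 0 < 1/n ≪ ε₃ ≪ ε₁ ≪ d ≤ 1 (specifically, it suffices that ε₁ = ε₃^{1/12}). If C₄(Ḡ) < ε₃, where Ḡ(x,y) = G(x,y) − d is the balanced function and C₄(f) = E_{x₁,x₂∈X, y₁,y₂∈Y} f(x₁,y₁)f(x₁,y₂)f(x₂,y₁)f(x₂,y₂), then G is ε₁-regular: for all X' ⊆ X, Y' ⊆ Y with |X'| > ε₁|X| and |Y'| > ε₁|Y|, the induced density d(X',Y') = e(X',Y')/(|X'||Y'|) satisfies |d(X',Y') − d| < ε₁. -/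
/-!
Write `f = G - d` and `C₄(f) = ∑_{y₁,y₂} c(y₁,y₂)²` with codegrees `c(y₁,y₂) = ∑ₓ f(x,y₁) f(x,y₂)`.
For `S = ∑_{X'×Y'} f`, Cauchy–Schwarz in `x` gives `S² ≤ |X| ∑_{y₁,y₂ ∈ Y'} c(y₁,y₂)`, and
Cauchy–Schwarz over pairs `(y₁,y₂)` then gives `S⁴ ≤ |X|²|Y|² C₄(f) < ε₁¹² |X|⁴|Y|⁴`.
Hence `|S| < ε₁³|X||Y| < ε₁|X'||Y'|`, and `S / (|X'||Y'|)` is exactly `d(X',Y') - d`.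
-/

open Finset

section

variable {ι X Y : Type*}

lemma sq_sum_le_card_univ_mul_sum_sq [Fintype ι] (s : Finset ι) (r : ι → ℝ) :
    (∑ i ∈ s, r i) ^ 2 ≤ Fintype.card ι * ∑ i, r i ^ 2 :=
  calc (∑ i ∈ s, r i) ^ 2 ≤ #s * ∑ i ∈ s, r i ^ 2 := sq_sum_le_card_mul_sum_sq
    _ ≤ Fintype.card ι * ∑ i, r i ^ 2 :=
      mul_le_mul (mod_cast card_le_univ s)
        (sum_le_sum_of_subset_of_nonneg (subset_univ s) fun _ _ _ => sq_nonneg _)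
        (sum_nonneg fun _ _ => sq_nonneg _) (by positivity)

lemma sum_box_div_sub_eq (G : X → Y → ℝ) (d : ℝ) {s : Finset X} {t : Finset Y}
    (hs : s.Nonempty) (ht : t.Nonempty) :
    (∑ x ∈ s, ∑ y ∈ t, G x y) / (#s * #t) - d = (∑ x ∈ s, ∑ y ∈ t, (G x y - d)) / (#s * #t) := by
  have : (#s : ℝ) * #t ≠ 0 := by positivity
  simp only [sum_sub_distrib, sum_const, nsmul_eq_mul]
  field_simp

variable [Fintype X]

def codegree (f : X → Y → ℝ) (y₁ y₂ : Y) : ℝ :=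
  ∑ x, f x y₁ * f x y₂

lemma sum_sq_sum_eq_sum_codegree (f : X → Y → ℝ) (t : Finset Y) :
    ∑ x, (∑ y ∈ t, f x y) ^ 2 = ∑ p ∈ t ×ˢ t, codegree f p.1 p.2 := by
  simp only [codegree, sq, sum_mul_sum, sum_product]
  rw [sum_comm]
  exact sum_congr rfl fun y₁ _ => sum_comm

variable [Fintype Y]

/-- `C₄(f)` without the normalisation by `|X|²|Y|²`. -/
def fourCycleSum (f : X → Y → ℝ) : ℝ :=
  ∑ x₁, ∑ x₂, ∑ y₁, ∑ y₂, f x₁ y₁ * f x₁ y₂ * f x₂ y₁ * f x₂ y₂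

lemma fourCycleSum_eq_sum_sq_codegree (f : X → Y → ℝ) :
    fourCycleSum f = ∑ p : Y × Y, codegree f p.1 p.2 ^ 2 := by
  simp only [fourCycleSum, codegree, sq, sum_mul_sum, Fintype.sum_prod_type]
  refine (sum_congr rfl fun x₁ _ => sum_comm).trans ?_
  refine sum_comm.trans (sum_congr rfl fun y₁ _ => ?_)
  refine (sum_congr rfl fun x₁ _ => sum_comm).trans ?_
  exact sum_comm.trans (sum_congr rfl fun y₂ _ => sum_congr rfl fun x₁ _ =>
    sum_congr rfl fun x₂ _ => by ring)

theorem sum_box_pow_four_le (f : X → Y → ℝ) (s : Finset X) (t : Finset Y) :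
    (∑ x ∈ s, ∑ y ∈ t, f x y) ^ 4 ≤
      (Fintype.card X : ℝ) ^ 2 * (Fintype.card Y : ℝ) ^ 2 * fourCycleSum f := by
  have h_rows : (∑ x ∈ s, ∑ y ∈ t, f x y) ^ 2 ≤
      Fintype.card X * ∑ p ∈ t ×ˢ t, codegree f p.1 p.2 := by
    rw [← sum_sq_sum_eq_sum_codegree]
    exact sq_sum_le_card_univ_mul_sum_sq s _
  set A := ∑ p ∈ t ×ˢ t, codegree f p.1 p.2
  have h_pairs : A ^ 2 ≤ (Fintype.card Y : ℝ) ^ 2 * fourCycleSum f := by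
    rw [fourCycleSum_eq_sum_sq_codegree, sq (Fintype.card Y : ℝ), ← Nat.cast_mul,
      ← Fintype.card_prod]
    exact sq_sum_le_card_univ_mul_sum_sq (t ×ˢ t) _
  calc (∑ x ∈ s, ∑ y ∈ t, f x y) ^ 4 = ((∑ x ∈ s, ∑ y ∈ t, f x y) ^ 2) ^ 2 := by ring
    _ ≤ (Fintype.card X * A) ^ 2 := pow_le_pow_left₀ (sq_nonneg _) h_rows 2
    _ = (Fintype.card X : ℝ) ^ 2 * A ^ 2 := by ring
    _ ≤ (Fintype.card X : ℝ) ^ 2 * ((Fintype.card Y : ℝ) ^ 2 * fourCycleSum f) := by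
      gcongr
    _ = _ := by ring

end

theorem quasirandom_implies_regular_general (X Y : Type*) [Fintype X] [Fintype Y]
    (G : X → Y → ℝ)
    (d : ℝ)
    (ε₁ ε₃ : ℝ) (hε₃ : 0 < ε₃) (hε₁ : ε₁ = ε₃ ^ ((1 : ℝ) / 12))
    (hqr : (∑ x₁, ∑ x₂, ∑ y₁, ∑ y₂,
        (G x₁ y₁ - d) * (G x₁ y₂ - d) * (G x₂ y₁ - d) * (G x₂ y₂ - d)) /
        ((Fintype.card X : ℝ) ^ 2 * (Fintype.card Y : ℝ) ^ 2) < ε₃) :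
    ∀ (X' : Finset X) (Y' : Finset Y),
      ε₁ * (Fintype.card X : ℝ) < X'.card → ε₁ * (Fintype.card Y : ℝ) < Y'.card →
      |(∑ x ∈ X', ∑ y ∈ Y', G x y) / ((X'.card : ℝ) * (Y'.card : ℝ)) - d| < ε₁ := by
  intro X' Y' hX' hY'
  set m : ℝ := (Fintype.card X : ℝ)
  set n : ℝ := (Fintype.card Y : ℝ)
  set S := ∑ x ∈ X', ∑ y ∈ Y', (G x y - d)
  have hε₁_pos : 0 < ε₁ := hε₁ ▸ by positivity
  have hε₃_eq : ε₃ = ε₁ ^ 12 := by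
    rw [hε₁, ← Real.rpow_natCast, ← Real.rpow_mul hε₃.le]
    norm_num
  have hX'_pos : (0 : ℝ) < #X' := lt_of_le_of_lt (by positivity) hX'
  have hY'_pos : (0 : ℝ) < #Y' := lt_of_le_of_lt (by positivity) hY'
  have hm : 0 < m := hX'_pos.trans_le (Nat.cast_le.mpr (card_le_univ X'))
  have hn : 0 < n := hY'_pos.trans_le (Nat.cast_le.mpr (card_le_univ Y'))
  have hC₄ : fourCycleSum (fun x y => G x y - d) < ε₁ ^ 12 * (m ^ 2 * n ^ 2) :=
    hε₃_eq ▸ (div_lt_iff₀ (by positivity)).mp hqr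
  have hS : |S| < ε₁ ^ 3 * (m * n) := by
    refine lt_of_pow_lt_pow_left₀ 4 (by positivity) ?_
    calc |S| ^ 4 = S ^ 4 := (Even.pow_abs ⟨2, rfl⟩ S)
      _ ≤ m ^ 2 * n ^ 2 * fourCycleSum (fun x y => G x y - d) := sum_box_pow_four_le _ X' Y'
      _ < m ^ 2 * n ^ 2 * (ε₁ ^ 12 * (m ^ 2 * n ^ 2)) := by gcongr
      _ = (ε₁ ^ 3 * (m * n)) ^ 4 := by ring
  rw [sum_box_div_sub_eq G d (card_pos.mp (mod_cast hX'_pos)) (card_pos.mp (mod_cast hY'_pos)),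
    abs_div, abs_of_pos (mul_pos hX'_pos hY'_pos), div_lt_iff₀ (mul_pos hX'_pos hY'_pos)]
  calc |S| < ε₁ ^ 3 * (m * n) := hS
    _ = ε₁ * ((ε₁ * m) * (ε₁ * n)) := by ring
    _ < ε₁ * (#X' * #Y') := by gcongr

/-- Quasirandomness implies regularity: if the balanced function `Ḡ = G - d` of a
bipartite graph `G` of density `d` satisfies `C₄(Ḡ) < ε₃`, then `G` is
`ε₁`-regular, where `ε₁ = ε₃^{1/12}`. -/
theorem quasirandom_implies_regular (X Y : Type*) [Fintype X] [Fintype Y]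
    [Nonempty X] [Nonempty Y] (G : X → Y → ℝ) (hG : ∀ x y, G x y = 0 ∨ G x y = 1)
    (d : ℝ)
    (hd : d = (∑ x, ∑ y, G x y) / ((Fintype.card X : ℝ) * (Fintype.card Y : ℝ)))
    (ε₁ ε₃ : ℝ) (hε₃ : 0 < ε₃) (hε₁ : ε₁ = ε₃ ^ ((1 : ℝ) / 12))
    (hqr : (∑ x₁, ∑ x₂, ∑ y₁, ∑ y₂,
        (G x₁ y₁ - d) * (G x₁ y₂ - d) * (G x₂ y₁ - d) * (G x₂ y₂ - d)) /
        ((Fintype.card X : ℝ) ^ 2 * (Fintype.card Y : ℝ) ^ 2) < ε₃) :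
    ∀ (X' : Finset X) (Y' : Finset Y),
      ε₁ * (Fintype.card X : ℝ) < X'.card → ε₁ * (Fintype.card Y : ℝ) < Y'.card →
      |(∑ x ∈ X', ∑ y ∈ Y', G x y) / ((X'.card : ℝ) * (Y'.card : ℝ)) - d| < ε₁ :=
  quasirandom_implies_regular_general X Y G d ε₁ ε₃ hε₃ hε₁ hqr
end

section
/- Let H be a 4-graph on a vertex set X = X₀ ∪ X₁ with |X₀| = |X₁| = n/2 (n even, n large), such that: (i) every 4-tuple with exactly 3 points in one Xᵢ and 1 point in X_{1-i} is an edge; (ii) for every pair {a,b} ⊆ X₀, the graph G_{a,b} = {e ∈ C(X₁,2) : {a,b} ∪ e ∈ E(H)} has minimum degree at least 2 on X₁; and (iii) there exist three points a,b,c ∈ X₀ and a matching e₁,e₂,e₃ in X₁ with e₁ ∈ G_{b,c}, e₂ ∈ G_{a,c}, e₃ ∈ G_{a,b}. Then H contains a copy of PG₂(3). -/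
/-!
Take homogeneous coordinates on `PG₂(3)` with the coordinate triangle as reference. The six points
with exactly one zero coordinate are the sides of the triangle minus its vertices; this blocking set
meets each side in two points and every other line in one or three. Send the vertices to `a, b, c`,
the two further points of the side opposite `a` (resp. `b`, `c`) to the matching edge in the link
of `{b, c}` (resp. `{a, c}`, `{a, b}`), and the four points with no zero coordinate to four other
points of `X₀`, which has at least seven points once `n ≥ 14`. The sides then go to the edges of the
triangle-coloured matching, and each of the other ten lines has type `3+1` or `1+3`, hence is an
edge.
-/

open scoped LinearAlgebra.Projectivization

instance : Fact (Nat.Prime 3) := ⟨by norm_num⟩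

/-- The point set of `PG₂(3)`: the projective plane over `F₃`. -/
abbrev PG23 := ℙ (ZMod 3) (Fin 3 → ZMod 3)

/-- The set of points on the line through two points. -/
def lineThrough (a b : PG23) : Set PG23 :=
  {c | c.submodule ≤ a.submodule ⊔ b.submodule}

/-- `L` is a line of `PG₂(3)`. -/
def IsLine (L : Set PG23) : Prop := ∃ a b : PG23, a ≠ b ∧ L = lineThrough a b

/-- A 4-graph `H` contains a copy of `PG₂(3)` if there is an injective map from
the points of `PG₂(3)` carrying every line to an edge of `H`. -/
def ContainsPG23 {X : Type*} [DecidableEq X] (H : Finset (Finset X)) : Prop :=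
  ∃ φ : PG23 → X, Function.Injective φ ∧
    ∀ L : Finset PG23, IsLine (↑L : Set PG23) → L.image φ ∈ H

open Finset Function

namespace PG23

/-- Representatives of the points: `0, 1, 2` are the vertices of the coordinate triangle,
`3, …, 6` have no zero coordinate and `7, …, 12` exactly one. -/
def rep : Fin 13 → Fin 3 → ZMod 3 :=
  ![![1, 0, 0], ![0, 1, 0], ![0, 0, 1], ![1, 1, 1], ![1, 1, 2], ![1, 2, 1], ![1, 2, 2],
    ![0, 1, 1], ![0, 1, 2], ![1, 0, 1], ![1, 0, 2], ![1, 1, 0], ![1, 2, 0]]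

def line (i : Fin 13) : Finset (Fin 13) := {m | rep i ⬝ᵥ rep m = 0}

lemma rep_ne_zero : ∀ k, rep k ≠ 0 := by decide

lemma exists_smul_rep : ∀ v : Fin 3 → ZMod 3, v ≠ 0 → ∃ k, ∃ c : ZMod 3, c • rep k = v := by
  decide

lemma eq_of_smul_rep_eq : ∀ j k, ∀ c : ZMod 3, c • rep k = rep j → j = k := by decide

lemma exists_mem_line_mem_line : ∀ j k, ∃ i, j ∈ line i ∧ k ∈ line i := by decide

lemma exists_smul_add_smul_eq_rep : ∀ i, ∀ j ∈ line i, ∀ k ∈ line i, j ≠ k → ∀ m ∈ line i,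
    ∃ s t : ZMod 3, s • rep j + t • rep k = rep m := by
  decide

noncomputable def point (k : Fin 13) : PG23 :=
  Projectivization.mk (ZMod 3) (rep k) (rep_ne_zero k)

lemma point_injective : Injective point := fun j k h =>
  eq_of_smul_rep_eq j k _ ((Projectivization.mk_eq_mk_iff' _ _ _ _ _).1 h).choose_spec

lemma point_surjective : Surjective point := by
  intro P
  induction P using Projectivization.ind with
  | h v hv =>
    obtain ⟨k, c, hc⟩ := exists_smul_rep v hv
    exact ⟨k, ((Projectivization.mk_eq_mk_iff' _ _ _ _ _).2 ⟨c, hc⟩).symm⟩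

lemma point_mem_lineThrough_iff (j k m : Fin 13) :
    point m ∈ lineThrough (point j) (point k) ↔
      ∃ s t : ZMod 3, s • rep j + t • rep k = rep m := by
  simp only [lineThrough, Set.mem_ofPred_eq, point, Projectivization.submodule_mk,
    Submodule.span_singleton_le_iff_mem, ← Submodule.span_insert, Submodule.mem_span_pair]

lemma lineThrough_point_eq {i j k : Fin 13} (hj : j ∈ line i) (hk : k ∈ line i)
    (hjk : j ≠ k) : lineThrough (point j) (point k) = point '' line i := by
  ext P
  obtain ⟨m, rfl⟩ := point_surjective P
  rw [point_mem_lineThrough_iff, point_injective.mem_set_image, mem_coe]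
  constructor
  · rintro ⟨s, t, hst⟩
    simp only [line, mem_filter, mem_univ, true_and] at hj hk ⊢
    simp [← hst, dotProduct_add, dotProduct_smul, hj, hk]
  · exact exists_smul_add_smul_eq_rep i j hj k hk hjk m

lemma exists_eq_image_line {L : Set PG23} (hL : IsLine L) : ∃ i, L = point '' line i := by
  obtain ⟨P, Q, hPQ, rfl⟩ := hL
  obtain ⟨j, rfl⟩ := point_surjective P
  obtain ⟨k, rfl⟩ := point_surjective Q
  obtain ⟨i, hj, hk⟩ := exists_mem_line_mem_line j k
  exact ⟨i, lineThrough_point_eq hj hk (ne_of_apply_ne point hPQ)⟩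

lemma line_zero : line 0 = {1, 2, 7, 8} := by decide

lemma line_one : line 1 = {0, 2, 9, 10} := by decide

lemma line_two : line 2 = {0, 1, 11, 12} := by decide

lemma card_filter_lt_seven_line : ∀ i : Fin 13, 3 ≤ (i : ℕ) →
    (#{m ∈ line i | m < 7} = 3 ∧ #{m ∈ line i | ¬ m < 7} = 1) ∨
    (#{m ∈ line i | m < 7} = 1 ∧ #{m ∈ line i | ¬ m < 7} = 3) := by
  decide

end PG23

open PG23

lemma containsPG23_of_forall_image_line_mem {X : Type*} [DecidableEq X]
    {H : Finset (Finset X)} {f : Fin 13 → X} (hf : Injective f)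
    (hH : ∀ i, (line i).image f ∈ H) : ContainsPG23 H := by
  let e := Equiv.ofBijective point ⟨point_injective, point_surjective⟩
  refine ⟨f ∘ e.symm, hf.comp e.symm.injective, fun L hL => ?_⟩
  obtain ⟨i, hi⟩ := exists_eq_image_line hL
  convert hH i using 1
  apply coe_injective
  rw [coe_image, coe_image, hi, Set.image_image]
  exact Set.image_congr fun m _ => congrArg f (e.symm_apply_apply m)

def ContainsMixedQuadruples {X : Type*} [Fintype X] [DecidableEq X] (X₀ : Finset X)
    (H : Finset (Finset X)) : Prop :=
  ∀ e : Finset X, e.card = 4 →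
    (((e ∩ X₀).card = 3 ∧ (e ∩ X₀ᶜ).card = 1) ∨
     ((e ∩ X₀).card = 1 ∧ (e ∩ X₀ᶜ).card = 3)) → e ∈ H

lemma ContainsMixedQuadruples.image_mem {ι X : Type*} [Fintype X] [DecidableEq X]
    {X₀ : Finset X} {H : Finset (Finset X)} (hH : ContainsMixedQuadruples X₀ H)
    {f : ι → X} (hf : Injective f) {p : ι → Prop} [DecidablePred p]
    (hp : ∀ i, f i ∈ X₀ ↔ p i) {s : Finset ι}
    (hs : (#{i ∈ s | p i} = 3 ∧ #{i ∈ s | ¬ p i} = 1) ∨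
      (#{i ∈ s | p i} = 1 ∧ #{i ∈ s | ¬ p i} = 3)) :
    s.image f ∈ H := by
  have hin : s.image f ∩ X₀ = {i ∈ s | p i}.image f := by
    rw [← filter_mem_eq_inter, filter_image]; simp only [hp]
  have hout : s.image f ∩ X₀ᶜ = {i ∈ s | ¬ p i}.image f := by
    rw [← filter_mem_eq_inter, filter_image]; simp only [mem_compl, hp]
  have hcard : #{i ∈ s | p i} + #{i ∈ s | ¬ p i} = #s := card_filter_add_card_filter_not p
  refine hH _ ?_ ?_
  · rw [card_image_of_injective _ hf]; omega
  · rwa [hin, hout, card_image_of_injective _ hf, card_image_of_injective _ hf]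

def labelling {X : Type*} (a b c : X) (d : Fin 4 → X) (p q r s t w : X) : Fin 13 → X :=
  ![a, b, c, d 0, d 1, d 2, d 3, p, q, r, s, t, w]

section Labelling

variable {X : Type*} [DecidableEq X] {X₀ : Finset X} {a b c p q r s t w : X}

lemma labelling_mem_iff (ha : a ∈ X₀) (hb : b ∈ X₀) (hc : c ∈ X₀)
    (d : Fin 4 ↪ ↥(X₀ \ {a, b, c})) (hp : p ∉ X₀) (hq : q ∉ X₀) (hr : r ∉ X₀)
    (hs : s ∉ X₀) (ht : t ∉ X₀) (hw : w ∉ X₀) (m : Fin 13) :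
    labelling a b c (fun i => d i) p q r s t w m ∈ X₀ ↔ m < 7 := by
  have hd i : (d i : X) ∈ X₀ := (mem_sdiff.1 (d i).2).1
  fin_cases m <;> simp [labelling, ha, hb, hc, hd, hp, hq, hr, hs, ht, hw]

lemma labelling_injective (ha : a ∈ X₀) (hb : b ∈ X₀) (hc : c ∈ X₀)
    (hab : a ≠ b) (hac : a ≠ c) (hbc : b ≠ c) (d : Fin 4 ↪ ↥(X₀ \ {a, b, c}))
    (hp : p ∉ X₀) (hq : q ∉ X₀) (hr : r ∉ X₀) (hs : s ∉ X₀) (ht : t ∉ X₀) (hw : w ∉ X₀)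
    (hpqrstw : [p, q, r, s, t, w].Nodup) :
    Injective (labelling a b c (fun i => d i) p q r s t w) := by
  apply List.nodup_ofFn.1
  change (([a, b, c] ++ List.ofFn fun i => (d i : X)) ++ [p, q, r, s, t, w]).Nodup
  have hd i : (d i : X) ∈ X₀ ∧ (d i : X) ∉ ({a, b, c} : Finset X) := mem_sdiff.1 (d i).2
  have hX₀ : ∀ x ∈ [a, b, c] ++ List.ofFn fun i => (d i : X), x ∈ X₀ := by
    simp [ha, hb, hc, hd]
  have hX₁ : ∀ x ∈ [p, q, r, s, t, w], x ∉ X₀ := by simp [hp, hq, hr, hs, ht, hw]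
  refine .append (.append (by simp [hab, hac, hbc])
    (List.nodup_ofFn.2 (Subtype.val_injective.comp d.injective)) ?_) hpqrstw
    fun x hx hx' => hX₁ x hx' (hX₀ x hx)
  intro x hx hx'
  obtain ⟨i, rfl⟩ := (List.mem_ofFn' _ _).1 hx'
  exact (hd i).2 (by simpa using hx)

end Labelling

/-- If a 4-graph `H` on `X = X₀ ∪ X₁` with `|X₀| = |X₁| = n/2` (`n` large)
contains all `3+1`-type quadruples, every pair link graph `G_{a,b}`
(`{a,b} ⊆ X₀`) has minimum degree at least 2 on `X₁`, and there is a
triangle-coloured matching — `a, b, c ∈ X₀` and a matching `e₁, e₂, e₃` in `X₁`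
with `e₁ ∈ G_{b,c}`, `e₂ ∈ G_{a,c}`, `e₃ ∈ G_{a,b}` — then `H` contains a copy
of `PG₂(3)`. -/
theorem triangle_coloured_matching_gives_PG23 :
    ∃ n₀ : ℕ, ∀ (X : Type) [Fintype X] [DecidableEq X],
      ∀ (X₀ : Finset X) (H : Finset (Finset X)),
      n₀ ≤ Fintype.card X →
      X₀.card = X₀ᶜ.card →
      (∀ e ∈ H, e.card = 4) →
      (∀ e : Finset X, e.card = 4 →
        (((e ∩ X₀).card = 3 ∧ (e ∩ X₀ᶜ).card = 1) ∨
         ((e ∩ X₀).card = 1 ∧ (e ∩ X₀ᶜ).card = 3)) → e ∈ H) →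
      (∀ a ∈ X₀, ∀ b ∈ X₀, a ≠ b → ∀ v ∈ X₀ᶜ,
        ∃ u w : X, u ∈ X₀ᶜ ∧ w ∈ X₀ᶜ ∧ u ≠ w ∧ u ≠ v ∧ w ≠ v ∧
          ({a, b, v, u} : Finset X) ∈ H ∧ ({a, b, v, w} : Finset X) ∈ H) →
      (∃ a b c : X, a ∈ X₀ ∧ b ∈ X₀ ∧ c ∈ X₀ ∧ a ≠ b ∧ a ≠ c ∧ b ≠ c ∧
        ∃ p q r s t w : X, p ∈ X₀ᶜ ∧ q ∈ X₀ᶜ ∧ r ∈ X₀ᶜ ∧ s ∈ X₀ᶜ ∧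
          t ∈ X₀ᶜ ∧ w ∈ X₀ᶜ ∧ ([p, q, r, s, t, w] : List X).Nodup ∧
          ({b, c, p, q} : Finset X) ∈ H ∧ ({a, c, r, s} : Finset X) ∈ H ∧
          ({a, b, t, w} : Finset X) ∈ H) →
      ContainsPG23 H := by
  refine ⟨14, fun X _ _ X₀ H hn hcard _ (hmixed : ContainsMixedQuadruples X₀ H) _ hmatch => ?_⟩
  obtain ⟨a, b, c, ha, hb, hc, hab, hac, hbc, p, q, r, s, t, w,
    hp, hq, hr, hs, ht, hw, hpqrstw, hbcpq, hacrs, habtw⟩ := hmatch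
  have h4 : 4 ≤ #(X₀ \ {a, b, c}) := by
    have := card_add_card_compl X₀
    have := le_card_sdiff {a, b, c} X₀
    have : #{a, b, c} ≤ 3 := card_le_three
    omega
  obtain ⟨d⟩ : Nonempty (Fin 4 ↪ ↥(X₀ \ {a, b, c})) :=
    Function.Embedding.nonempty_of_card_le (by rwa [Fintype.card_fin, Fintype.card_coe])
  simp only [mem_compl] at hp hq hr hs ht hw
  have hf := labelling_injective ha hb hc hab hac hbc d hp hq hr hs ht hw hpqrstw
  have hcol := labelling_mem_iff ha hb hc d hp hq hr hs ht hw
  refine containsPG23_of_forall_image_line_mem hf fun i => ?_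
  obtain rfl | rfl | rfl | hi : i = 0 ∨ i = 1 ∨ i = 2 ∨ 3 ≤ (i : ℕ) := by omega
  · simpa [line_zero, labelling] using hbcpq
  · simpa [line_one, labelling] using hacrs
  · simpa [line_two, labelling] using habtw
  · exact hmixed.image_mem hf hcol (card_filter_lt_seven_line i hi)
end
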